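/- There exist finite reactive LPTSes R1 and R2 with R1 ⋠ R2 such that no fully-probabilistic LPTS is a counterexample, i.e. every fully-probabilistic C with C ≼ R1 also satisfies C ≼ R2. -/

import Mathlib

open Classical

structure FDist (S : Type) [Fintype S] where
  pmf : S → ℝ
  nonneg : ∀ s, 0 ≤ pmf s
  sum_one : ∑ s, pmf s = 1

namespace FDist

variable {S S1 S2 : Type} [Fintype S] [Fintype S1] [Fintype S2]

noncomputable def prob (μ : FDist S) (T : Set S) : ℝ :=
  ∑ s, if s ∈ T then μ.pmf s else 0

def supp (μ : FDist S) : Set S := {s | 0 < μ.pmf s}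

noncomputable def dirac (s : S) : FDist S where
  pmf t := if t = s then 1 else 0
  nonneg t := by (try dsimp only); split <;> norm_num
  sum_one := by simp

noncomputable def prod (μ1 : FDist S1) (μ2 : FDist S2) : FDist (S1 × S2) where
  pmf p := μ1.pmf p.1 * μ2.pmf p.2
  nonneg p := mul_nonneg (μ1.nonneg _) (μ2.nonneg _)
  sum_one := by
    rw [Fintype.sum_prod_type]
    simp_rw [← Finset.mul_sum, μ2.sum_one, mul_one]
    exact μ1.sum_one

end FDist

/-- Image of a set under a relation: `R(T) = {s2 | ∃ s1 ∈ T, (s1,s2) ∈ R}`. -/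
def relImage {S1 S2 : Type} (R : Set (S1 × S2)) (T : Set S1) : Set S2 :=
  {s2 | ∃ s1 ∈ T, (s1, s2) ∈ R}

/-- The lifting `μ1 ⊑_R μ2` of a relation on states to distributions,
via the Hall-type subset condition. -/
def liftRel {S1 S2 : Type} [Fintype S1] [Fintype S2]
    (R : Set (S1 × S2)) (μ1 : FDist S1) (μ2 : FDist S2) : Prop :=
  ∀ T ⊆ μ1.supp, μ1.prob T ≤ μ2.prob (relImage R T)

/-- A (finite, finitely-branching) labeled probabilistic transition system. -/
structure LPTS (S : Type) (Act : Type) [Fintype S] where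
  start : S
  alpha : Set Act
  trans : S → Act → Set (FDist S)
  trans_mem : ∀ s a μ, μ ∈ trans s a → a ∈ alpha
  finite_trans : ∀ s a, (trans s a).Finite

/-- `R` is a strong simulation between `L1` and `L2`. -/
def StrongSim {S1 S2 Act : Type} [Fintype S1] [Fintype S2]
    (L1 : LPTS S1 Act) (L2 : LPTS S2 Act) (R : Set (S1 × S2)) : Prop :=
  ∀ s1 s2, (s1, s2) ∈ R → ∀ a μ1, μ1 ∈ L1.trans s1 a →
    ∃ μ2 ∈ L2.trans s2 a, liftRel R μ1 μ2

/-- `L2` strongly simulates `L1` (written `L1 ≼ L2`). -/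
def Sim {S1 S2 Act : Type} [Fintype S1] [Fintype S2]
    (L1 : LPTS S1 Act) (L2 : LPTS S2 Act) : Prop :=
  ∃ R, StrongSim L1 L2 R ∧ (L1.start, L2.start) ∈ R

/-- Reactive: at most one transition per state and action. -/
def Reactive {S Act : Type} [Fintype S] (L : LPTS S Act) : Prop :=
  ∀ s a, (L.trans s a).Subsingleton

/-- Fully probabilistic: at most one transition per state. -/
def FullyProbabilistic {S Act : Type} [Fintype S] (L : LPTS S Act) : Prop :=
  ∀ s, {p : Act × FDist S | p.2 ∈ L.trans s p.1}.Subsingleton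

/-!
In `R1` the state `r11`, reached with probability 1/2, offers both `y` and `z`; in `R2` only
`r22`, reached with probability 1/3, does, so `R1 ⋠ R2`.

A fully probabilistic `C` simulated by `R1` can, after its `x`-step, only perform a single `y`
or a single `z` and then deadlock. A successor that does so is simulated by `r22` and by one of
`r21`, `r23` (mass 2/3), and a deadlocked successor by all three (mass 1). A set of successors
of mass more than 1/2 must be matched to `r12` in `R1`, so it contains a deadlocked state; hence
the successor distribution of `C` lifts to that of `R2`.
-/

namespace FDist

variable {S : Type} [Fintype S]

lemma prob_nonneg (μ : FDist S) (T : Set S) : 0 ≤ μ.prob T :=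
  Finset.sum_nonneg fun s _ => by split_ifs <;> simp [μ.nonneg s]

lemma prob_mono (μ : FDist S) {T U : Set S} (h : T ⊆ U) : μ.prob T ≤ μ.prob U :=
  Finset.sum_le_sum fun s _ => by
    by_cases hT : s ∈ T
    · simp [hT, h hT]
    · split_ifs <;> simp [μ.nonneg s]

lemma prob_le_one (μ : FDist S) (T : Set S) : μ.prob T ≤ 1 :=
  μ.sum_one ▸ Finset.sum_le_sum fun s _ => by split_ifs <;> simp [μ.nonneg s]

lemma prob_singleton (μ : FDist S) (s : S) : μ.prob {s} = μ.pmf s := by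
  simp [prob]

lemma prob_empty (μ : FDist S) : μ.prob ∅ = 0 := by
  simp [prob]

lemma prob_eq_zero_of_disjoint_supp {μ : FDist S} {T : Set S} (h : Disjoint T μ.supp) :
    μ.prob T = 0 :=
  Finset.sum_eq_zero fun s _ => by
    split_ifs with hs
    · exact le_antisymm (not_lt.1 (h.notMem_of_mem_left hs)) (μ.nonneg s)
    · rfl

lemma supp_dirac (s : S) : (dirac s).supp = {s} := by
  ext t
  by_cases ht : t = s <;> simp [supp, dirac, ht]

lemma prob_dirac_of_mem {s : S} {T : Set S} (h : s ∈ T) : (dirac s).prob T = 1 := by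
  rw [prob, Finset.sum_eq_single s] <;> simp_all [dirac]

noncomputable def uniform (A : Finset S) (hA : A.Nonempty) : FDist S where
  pmf s := if s ∈ A then (A.card : ℝ)⁻¹ else 0
  nonneg s := by positivity
  sum_one := by
    rw [Finset.sum_ite_mem, Finset.univ_inter, Finset.sum_const, nsmul_eq_mul]
    exact mul_inv_cancel₀ (by exact_mod_cast hA.card_pos.ne')

lemma supp_uniform (A : Finset S) (hA : A.Nonempty) : (uniform A hA).supp = A := by
  ext s
  by_cases hs : s ∈ A <;> simp [supp, uniform, hs, hA.card_pos]

lemma prob_uniform (A : Finset S) (hA : A.Nonempty) (T : Set S) :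
    (uniform A hA).prob T = ({s ∈ A | s ∈ T} : Finset S).card / A.card := by
  simp only [prob, uniform, ← ite_and]
  rw [Finset.sum_ite, Finset.sum_const_zero, add_zero, Finset.sum_const, nsmul_eq_mul,
    div_eq_mul_inv]
  congr 3
  ext s
  simp [and_comm]

end FDist

section Simulation

variable {S1 S2 Act : Type} [Fintype S1] [Fintype S2]

lemma liftRel.exists_mem_supp {R : Set (S1 × S2)} {μ1 : FDist S1} {μ2 : FDist S2}
    (h : liftRel R μ1 μ2) {s1 : S1} (hs1 : s1 ∈ μ1.supp) : ∃ s2 ∈ μ2.supp, (s1, s2) ∈ R := by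
  by_contra! hnone
  have hpos : 0 < μ1.prob {s1} := by rwa [FDist.prob_singleton]
  have hzero : μ2.prob (relImage R {s1}) = 0 :=
    FDist.prob_eq_zero_of_disjoint_supp <| Set.disjoint_left.2 fun s2 ⟨_, hs, hR⟩ h2 =>
      hnone s2 h2 (Set.mem_singleton_iff.1 hs ▸ hR)
  linarith [h {s1} (Set.singleton_subset_iff.2 hs1)]

lemma liftRel_dirac {R : Set (S1 × S2)} {μ : FDist S1} {s2 : S2}
    (h : ∀ s1 ∈ μ.supp, (s1, s2) ∈ R) : liftRel R μ (FDist.dirac s2) := by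
  intro T hT
  rcases T.eq_empty_or_nonempty with rfl | ⟨s1, hs1⟩
  · rw [FDist.prob_empty]
    exact FDist.prob_nonneg _ _
  · rw [FDist.prob_dirac_of_mem (show s2 ∈ relImage R T from ⟨s1, hs1, h s1 (hT hs1)⟩)]
    exact μ.prob_le_one T

namespace LPTS

variable {S : Type} [Fintype S]

def IsDeadlock (L : LPTS S Act) (s : S) : Prop :=
  ∀ a, L.trans s a = ∅

def DeadlocksAfterStep (L : LPTS S Act) (A : Set Act) (s : S) : Prop :=
  ∀ a μ, μ ∈ L.trans s a → a ∈ A ∧ ∀ t ∈ μ.supp, L.IsDeadlock t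

lemma IsDeadlock.deadlocksAfterStep {L : LPTS S Act} {s : S} (h : L.IsDeadlock s)
    (A : Set Act) : L.DeadlocksAfterStep A s := by
  intro a μ hμ
  simp [h a] at hμ

end LPTS

namespace StrongSim

variable {L1 : LPTS S1 Act} {L2 : LPTS S2 Act} {R : Set (S1 × S2)}

lemma nonempty_trans (hR : StrongSim L1 L2 R) {s1 : S1} {s2 : S2} (h : (s1, s2) ∈ R) {a : Act}
    (ha : (L1.trans s1 a).Nonempty) : (L2.trans s2 a).Nonempty :=
  let ⟨μ1, hμ1⟩ := ha
  let ⟨μ2, hμ2, _⟩ := hR s1 s2 h a μ1 hμ1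
  ⟨μ2, hμ2⟩

lemma isDeadlock (hR : StrongSim L1 L2 R) {s1 : S1} {s2 : S2} (h : (s1, s2) ∈ R)
    (hs2 : L2.IsDeadlock s2) : L1.IsDeadlock s1 := fun a =>
  Set.not_nonempty_iff_eq_empty.1 fun ha => by
    simpa [hs2 a] using hR.nonempty_trans h ha

lemma deadlocksAfterStep (hR : StrongSim L1 L2 R) {s1 : S1} {s2 : S2} (h : (s1, s2) ∈ R)
    {A : Set Act} (hs2 : L2.DeadlocksAfterStep A s2) : L1.DeadlocksAfterStep A s1 := by
  intro a μ1 hμ1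
  obtain ⟨μ2, hμ2, hlift⟩ := hR s1 s2 h a μ1 hμ1
  refine ⟨(hs2 a μ2 hμ2).1, fun t ht => ?_⟩
  obtain ⟨t2, ht2, htR⟩ := hlift.exists_mem_supp ht
  exact hR.isDeadlock htR ((hs2 a μ2 hμ2).2 t2 ht2)

end StrongSim

lemma FullyProbabilistic.deadlocksAfterStep_singleton_or {S : Type} [Fintype S]
    {L : LPTS S Act} (hL : FullyProbabilistic L) {s : S} {a b : Act}
    (h : L.DeadlocksAfterStep {a, b} s) :
    L.DeadlocksAfterStep {a} s ∨ L.DeadlocksAfterStep {b} s := by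
  by_cases hdead : L.IsDeadlock s
  · exact Or.inl (hdead.deadlocksAfterStep _)
  obtain ⟨c, μ, hμ⟩ : ∃ c μ, μ ∈ L.trans s c := by
    simpa [LPTS.IsDeadlock, Set.eq_empty_iff_forall_notMem] using hdead
  have only_c : ∀ d ν, ν ∈ L.trans s d → d = c := fun d ν hν =>
    congrArg Prod.fst (hL s (x := (d, ν)) (y := (c, μ)) hν hμ)
  have restrict : L.DeadlocksAfterStep {c} s := fun d ν hν =>
    ⟨only_c d ν hν, (h d ν hν).2⟩
  rcases (h c μ hμ).1 with rfl | hc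
  · exact Or.inl restrict
  · exact Or.inr (Set.mem_singleton_iff.1 hc ▸ restrict)

end Simulation

namespace Example

inductive Label | x | y | z

inductive R1State | r1 | r11 | r12 | leaf
  deriving DecidableEq

inductive R2State | r2 | r21 | r22 | r23 | leaf
  deriving DecidableEq

open Label R1State R2State FDist

instance : Fintype R1State := ⟨{r1, r11, r12, R1State.leaf}, fun s => by cases s <;> simp⟩

instance : Fintype R2State := ⟨{r2, r21, r22, r23, R2State.leaf}, fun s => by cases s <;> simp⟩

noncomputable def μ1 : FDist R1State := uniform {r11, r12} (Finset.insert_nonempty _ _)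

noncomputable def μ2 : FDist R2State := uniform {r21, r22, r23} (Finset.insert_nonempty _ _)

noncomputable def trans1 : R1State → Label → Set (FDist R1State)
  | r1, x => {μ1}
  | r11, y => {dirac R1State.leaf}
  | r11, z => {dirac R1State.leaf}
  | _, _ => ∅

noncomputable def trans2 : R2State → Label → Set (FDist R2State)
  | r2, x => {μ2}
  | r21, y => {dirac R2State.leaf}
  | r22, y => {dirac R2State.leaf}
  | r22, z => {dirac R2State.leaf}
  | r23, z => {dirac R2State.leaf}
  | _, _ => ∅

lemma trans1_subsingleton (s : R1State) (a : Label) : (trans1 s a).Subsingleton := by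
  cases s <;> cases a <;> simp [trans1]

lemma trans2_subsingleton (s : R2State) (a : Label) : (trans2 s a).Subsingleton := by
  cases s <;> cases a <;> simp [trans2]

noncomputable def R1 : LPTS R1State Label where
  start := r1
  alpha := Set.univ
  trans := trans1
  trans_mem _ _ _ _ := Set.mem_univ _
  finite_trans s a := (trans1_subsingleton s a).finite

noncomputable def R2 : LPTS R2State Label where
  start := r2
  alpha := Set.univ
  trans := trans2
  trans_mem _ _ _ _ := Set.mem_univ _
  finite_trans s a := (trans2_subsingleton s a).finite

lemma μ1_prob_r11 : μ1.prob {r11} = 1 / 2 := by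
  rw [μ1, prob_uniform]
  simp [Finset.filter_insert, Finset.filter_singleton]

lemma μ1_prob_le_half {U : Set R1State} (h : r12 ∉ U) : μ1.prob U ≤ 1 / 2 := by
  rw [μ1, prob_uniform]
  simp [Finset.filter_insert, Finset.filter_singleton, h]
  split_ifs <;> simp

lemma μ2_prob_r22 : μ2.prob {r22} = 1 / 3 := by
  rw [μ2, prob_uniform]
  simp [Finset.filter_insert, Finset.filter_singleton]

lemma two_thirds_le_μ2_prob {U : Set R2State} (h22 : r22 ∈ U) (h : r21 ∈ U ∨ r23 ∈ U) :
    2 / 3 ≤ μ2.prob U := by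
  rw [μ2, prob_uniform]
  rcases h with h | h <;> simp [Finset.filter_insert, Finset.filter_singleton, h22, h] <;>
    split_ifs <;> simp <;> norm_num

lemma μ2_prob_eq_one {U : Set R2State} (h21 : r21 ∈ U) (h22 : r22 ∈ U) (h23 : r23 ∈ U) :
    μ2.prob U = 1 := by
  rw [μ2, prob_uniform]
  simp [Finset.filter_insert, Finset.filter_singleton, h21, h22, h23]

lemma not_sim_R1_R2 : ¬ Sim R1 R2 := by
  rintro ⟨R, hR, hstart⟩
  obtain ⟨ν, hν, hlift⟩ := hR r1 r2 hstart x μ1 (by simp [R1, trans1])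
  obtain rfl : ν = μ2 := by simpa [R2, trans2] using hν
  have image_r11 : relImage R {r11} ⊆ {r22} := by
    rintro w ⟨_, rfl, hw⟩
    have hy := hR.nonempty_trans hw (a := y) (by simp [R1, trans1])
    have hz := hR.nonempty_trans hw (a := z) (by simp [R1, trans1])
    cases w <;> simp_all [R2, trans2]
  have := hlift {r11} (by simp [μ1, supp_uniform])
  linarith [μ2.prob_mono image_r11, μ1_prob_r11, μ2_prob_r22]

lemma R1_deadlocksAfterStep_of_mem_supp {s : R1State} (hs : s ∈ μ1.supp) :
    R1.DeadlocksAfterStep {y, z} s := by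
  have leaf_dead : R1.IsDeadlock R1State.leaf := fun a => by cases a <;> rfl
  simp only [μ1, supp_uniform, Finset.coe_insert, Finset.coe_singleton, Set.mem_insert_iff,
    Set.mem_singleton_iff] at hs
  rcases hs with rfl | rfl
  · intro a μ hμ
    cases a <;> simp only [R1, trans1, Set.mem_singleton_iff, Set.mem_empty_iff_false] at hμ <;>
      subst hμ <;> simp [supp_dirac, leaf_dead]
  · exact LPTS.IsDeadlock.deadlocksAfterStep (fun a => by cases a <;> rfl) _

def offers : R2State → Set Label
  | r21 => {y}
  | r22 => {y, z}
  | r23 => {z}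
  | _ => ∅

lemma dirac_leaf_mem_trans2 {w : R2State} {a : Label} (h : a ∈ offers w) :
    dirac R2State.leaf ∈ R2.trans w a := by
  cases w <;> cases a <;> simp_all [offers, R2, trans2]

def simRel {T : Type} [Fintype T] (C : LPTS T Label) (Q : Set (T × R1State)) :
    Set (T × R2State) :=
  {p | ((p.1, r1) ∈ Q ∧ p.2 = r2) ∨ C.DeadlocksAfterStep (offers p.2) p.1}

variable {T : Type} [Fintype T] {C : LPTS T Label} {Q : Set (T × R1State)}

lemma liftRel_simRel_μ2 (hC : FullyProbabilistic C) (hQ : StrongSim C R1 Q) {μ : FDist T}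
    (hμ : liftRel Q μ μ1) : liftRel (simRel C Q) μ μ2 := by
  intro U hU
  rcases U.eq_empty_or_nonempty with rfl | ⟨t0, ht0⟩
  · rw [prob_empty]
    exact prob_nonneg _ _
  by_cases hr12 : r12 ∈ relImage Q U
  · obtain ⟨t, htU, htQ⟩ := hr12
    have hdead : C.IsDeadlock t := hQ.isDeadlock htQ fun a => by cases a <;> rfl
    have mem_image (w : R2State) : w ∈ relImage (simRel C Q) U :=
      ⟨t, htU, Or.inr (hdead.deadlocksAfterStep _)⟩
    calc μ.prob U ≤ 1 := μ.prob_le_one U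
      _ = μ2.prob (relImage (simRel C Q) U) := (μ2_prob_eq_one (mem_image _) (mem_image _)
        (mem_image _)).symm
  · have step : C.DeadlocksAfterStep {y, z} t0 := by
      obtain ⟨s, hs, hQs⟩ := hμ.exists_mem_supp (hU ht0)
      exact hQ.deadlocksAfterStep hQs (R1_deadlocksAfterStep_of_mem_supp hs)
    have h22 : r22 ∈ relImage (simRel C Q) U := ⟨t0, ht0, Or.inr step⟩
    have h21_23 : r21 ∈ relImage (simRel C Q) U ∨ r23 ∈ relImage (simRel C Q) U :=
      (hC.deadlocksAfterStep_singleton_or step).imp (fun h => ⟨t0, ht0, Or.inr h⟩)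
        (fun h => ⟨t0, ht0, Or.inr h⟩)
    calc μ.prob U ≤ μ1.prob (relImage Q U) := hμ U hU
      _ ≤ 2 / 3 := by linarith [μ1_prob_le_half hr12]
      _ ≤ _ := two_thirds_le_μ2_prob h22 h21_23

lemma sim_R2_of_sim_R1 (hC : FullyProbabilistic C) (h : Sim C R1) : Sim C R2 := by
  obtain ⟨Q, hQ, hstart⟩ := h
  refine ⟨simRel C Q, ?_, Or.inl ⟨hstart, rfl⟩⟩
  rintro c w (⟨hcQ, rfl⟩ | hstep) a μ hμ
  · obtain ⟨ν, hν, hlift⟩ := hQ c r1 hcQ a μ hμ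
    obtain ⟨rfl, rfl⟩ : a = x ∧ ν = μ1 := by cases a <;> simp_all [R1, trans1]
    exact ⟨μ2, by simp [R2, trans2], liftRel_simRel_μ2 hC hQ hlift⟩
  · obtain ⟨ha, hdead⟩ := hstep a μ hμ
    exact ⟨dirac R2State.leaf, dirac_leaf_mem_trans2 ha,
      liftRel_dirac fun t ht => Or.inr ((hdead t ht).deadlocksAfterStep _)⟩

end Example

/-- There are finite reactive LPTSes `R1 ⋠ R2` admitting no fully-probabilistic
counterexample: every fully-probabilistic `C` with `C ≼ R1` also has `C ≼ R2`. -/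
theorem no_fully_probabilistic_counterexample :
    ∃ (Act T1 T2 : Type) (i1 : Fintype T1) (i2 : Fintype T2)
      (R1 : @LPTS T1 Act i1) (R2 : @LPTS T2 Act i2),
      @Reactive T1 Act i1 R1 ∧ @Reactive T2 Act i2 R2 ∧
      ¬ @Sim T1 T2 Act i1 i2 R1 R2 ∧
      ∀ (T : Type) (i : Fintype T) (C : @LPTS T Act i),
        @FullyProbabilistic T Act i C →
        @Sim T T1 Act i i1 C R1 → @Sim T T2 Act i i2 C R2 :=
  ⟨Example.Label, Example.R1State, Example.R2State, inferInstance, inferInstance, Example.R1,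
    Example.R2, Example.trans1_subsingleton, Example.trans2_subsingleton, Example.not_sim_R1_R2,
    fun _ _ _ hC => Example.sim_R2_of_sim_R1 hC⟩
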